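/- arXiv:math/0302198 — 2 statements merged into one kernel-verified Lean document; each statement's English description precedes it below -/
import Mathlib

section
/- The partial derivatives ∂f^{(y)}/∂z(w⁻) and ∂f^{(y)}/∂v⁺_j(w⁻) (j = 1, …, N) cannot vanish simultaneously; that is, at least one of these N+1 real numbers is nonzero. -/
open Filter Topology

/-- In the setting of a general evolution equation with a Silnikov homoclinic
orbit (saddle `0` with linearized normal form `ẋ = -αx - βy`, `ẏ = βx - αy`, `ż = γz`,
`∂ₜ v± = L± v±` on a neighborhood `Ω` of `0`, homoclinic orbit `h` intersecting the
`(z = 0)`-boundary of the Poincaré section `S₀` transversally at `w⁺ = (x*,0,0,0,v*⁻)`,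
and `w⁻ = F^{-T} w⁺ = (0,0,η,v*⁺,0)`), the partial derivatives `∂f⁽ʸ⁾/∂z (w⁻)` and
`∂f⁽ʸ⁾/∂v⁺ⱼ (w⁻)` (`j = 1, …, N`) of the `y`-component `f⁽ʸ⁾` of the time-`T` map `F^T`
cannot vanish simultaneously. -/
theorem statement0
    -- the separable Hilbert space V⁻ and the number N of unstable modes
    (V : Type*) [NormedAddCommGroup V] [InnerProductSpace ℝ V] [CompleteSpace V]
    [TopologicalSpace.SeparableSpace V]
    (N : ℕ) (hN : 0 < N)
    -- spectral constants
    (α β γ : ℝ) (hα : 0 < α) (hβ : 0 < β) (hγ : 0 < γ) (hαγ : α < γ)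
    (Lp : EuclideanSpace ℝ (Fin N) →L[ℝ] EuclideanSpace ℝ (Fin N)) (Lm : V →L[ℝ] V)
    (cp cm lp lm : ℝ) (hcp : 0 < cp) (hcm : 0 < cm) (hlp : γ < lp) (hlm : α < lm)
    (hLp : ∀ t : ℝ, t ≤ 0 → ‖NormedSpace.exp (t • Lp)‖ ≤ cp * Real.exp (lp * t))
    (hLm : ∀ t : ℝ, 0 ≤ t → ‖NormedSpace.exp (t • Lm)‖ ≤ cm * Real.exp (-lm * t))
    -- the evolution operator: a jointly continuous group of C² maps
    (F : ℝ → (ℝ × ℝ × ℝ × EuclideanSpace ℝ (Fin N) × V) →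
      (ℝ × ℝ × ℝ × EuclideanSpace ℝ (Fin N) × V))
    (hF0 : F 0 = id)
    (hFgrp : ∀ t s : ℝ, F (t + s) = F t ∘ F s)
    (hFcont : Continuous fun p : ℝ × (ℝ × ℝ × ℝ × EuclideanSpace ℝ (Fin N) × V) => F p.1 p.2)
    (hFsmooth : ∀ t : ℝ, ContDiff ℝ 2 (F t))
    -- the neighborhood Ω of 0 on which the dynamics is linear (normal form)
    (Ω : Set (ℝ × ℝ × ℝ × EuclideanSpace ℝ (Fin N) × V))
    (hΩ : Ω ∈ 𝓝 (0 : ℝ × ℝ × ℝ × EuclideanSpace ℝ (Fin N) × V))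
    (hlin : ∀ u : ℝ × ℝ × ℝ × EuclideanSpace ℝ (Fin N) × V, ∀ t : ℝ, F t u ∈ Ω →
      HasDerivAt (fun s => F s u)
        (-α * (F t u).1 - β * (F t u).2.1,
         β * (F t u).1 - α * (F t u).2.1,
         γ * (F t u).2.2.1,
         Lp (F t u).2.2.2.1,
         Lm (F t u).2.2.2.2) t)
    -- the Silnikov homoclinic orbit h, asymptotic to 0 as t → ±∞
    (h : ℝ → ℝ × ℝ × ℝ × EuclideanSpace ℝ (Fin N) × V)
    (hh : ∀ t : ℝ, h t = F t (h 0))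
    (hhtop : Tendsto h atTop (𝓝 0)) (hhbot : Tendsto h atBot (𝓝 0))
    (hhne : ∀ t : ℝ, h t ≠ 0)
    -- tangent to the (x,y)-plane at 0 as t → +∞
    (htanxy : Tendsto (fun t => ‖((h t).2.2.1, (h t).2.2.2.1, (h t).2.2.2.2)‖ / ‖h t‖)
      atTop (𝓝 0))
    -- tangent to the positive z-axis at 0 as t → -∞
    (htanz : Tendsto (fun t => ‖((h t).1, (h t).2.1, (h t).2.2.2.1, (h t).2.2.2.2)‖ / ‖h t‖)
      atBot (𝓝 0))
    (hzpos : ∀ᶠ t in atBot, 0 < (h t).2.2.1)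
    -- C² stable and unstable manifolds with one-dimensional tangent intersection along h
    (TWs TWu : ℝ → Submodule ℝ (ℝ × ℝ × ℝ × EuclideanSpace ℝ (Fin N) × V))
    (hdim : ∀ t : ℝ, Module.finrank ℝ ↥(TWu t ⊓ TWs t) = 1)
    -- the Poincaré section S₀, contained in Ω
    (η : ℝ) (hη : 0 < η)
    (S₀ : Set (ℝ × ℝ × ℝ × EuclideanSpace ℝ (Fin N) × V))
    (hS₀ : S₀ = {w | w.2.1 = 0 ∧ η * Real.exp (-2 * Real.pi * α / β) < w.1 ∧ w.1 < η ∧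
      0 < w.2.2.1 ∧ w.2.2.1 < η ∧ ‖w.2.2.2.1‖ < η ∧ ‖w.2.2.2.2‖ < η})
    (hS₀Ω : S₀ ⊆ Ω)
    -- the transversal intersection point w⁺ of h with the (z = 0)-boundary of S₀
    (xstar : ℝ) (vstarm : V)
    (wplus : ℝ × ℝ × ℝ × EuclideanSpace ℝ (Fin N) × V)
    (hwplus : wplus = (xstar, 0, 0, 0, vstarm))
    (hwplusbd : η * Real.exp (-2 * Real.pi * α / β) < xstar ∧ xstar < η ∧ ‖vstarm‖ < η)
    (t₀ : ℝ) (hht₀ : h t₀ = wplus)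
    (τ : ℝ × ℝ × ℝ × EuclideanSpace ℝ (Fin N) × V)
    (hτ : HasDerivAt h τ t₀) (htrans : τ.2.1 ≠ 0)
    -- the point w⁻ = F^{-T}(w⁺) on h, with z-coordinate η
    (T : ℝ) (hT : 0 < T)
    (vstarp : EuclideanSpace ℝ (Fin N))
    (wminus : ℝ × ℝ × ℝ × EuclideanSpace ℝ (Fin N) × V)
    (hwminus : wminus = ((0 : ℝ), (0 : ℝ), η, vstarp, (0 : V)))
    (hFT : F T wminus = wplus)
    (hwmΩ : wminus ∈ Ω) :
    -- conclusion: ∂f⁽ʸ⁾/∂z (w⁻) and ∂f⁽ʸ⁾/∂v⁺ⱼ (w⁻), j = 1,…,N, are not all zero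
    ¬ (fderiv ℝ (fun w => (F T w).2.1) wminus
          ((0 : ℝ), (0 : ℝ), (1 : ℝ), (0 : EuclideanSpace ℝ (Fin N)), (0 : V)) = 0 ∧
       ∀ j : Fin N, fderiv ℝ (fun w => (F T w).2.1) wminus
          ((0 : ℝ), (0 : ℝ), (0 : ℝ), EuclideanSpace.single j 1, (0 : V)) = 0) := by

  intro ⟨h1, h2⟩
  -- notation
  -- the fderiv of the y-component of F^T at wminus
  have hdF : DifferentiableAt ℝ (F T) wminus :=
    ((hFsmooth T).differentiable two_ne_zero).differentiableAt
  have hdiff : DifferentiableAt ℝ (fun w : ℝ × ℝ × ℝ × EuclideanSpace ℝ (Fin N) × V => (F T w).2.1) wminus := hdF.snd.fst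
  set L : (ℝ × ℝ × ℝ × EuclideanSpace ℝ (Fin N) × V) →L[ℝ] ℝ := fderiv ℝ (fun w : ℝ × ℝ × ℝ × EuclideanSpace ℝ (Fin N) × V => (F T w).2.1) wminus with hL
  have hLat : HasFDerivAt (fun w : ℝ × ℝ × ℝ × EuclideanSpace ℝ (Fin N) × V => (F T w).2.1) L wminus := hdiff.hasFDerivAt
  -- derivative of the flow through wminus at time 0
  have hF0w : F 0 wminus = wminus := by rw [hF0]; rfl
  have hlin0 := hlin wminus 0 (by rw [hF0w]; exact hwmΩ)
  rw [hF0w] at hlin0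
  have hvec : ((-α * wminus.1 - β * wminus.2.1, β * wminus.1 - α * wminus.2.1,
      γ * wminus.2.2.1, Lp wminus.2.2.2.1, Lm wminus.2.2.2.2) :
      ℝ × ℝ × ℝ × EuclideanSpace ℝ (Fin N) × V)
      = ((0 : ℝ), (0 : ℝ), γ * η, Lp vstarp, (0 : V)) := by
    rw [hwminus]; simp
  rw [hvec] at hlin0
  have hξ : HasDerivAt (fun s => F s wminus)
      ((0 : ℝ), (0 : ℝ), γ * η, Lp vstarp, (0 : V)) 0 := hlin0
  -- derivative of s ↦ (F T (F s wminus)).2.1 at 0 via chain rule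
  have hcomp : HasDerivAt (fun s => (F T (F s wminus)).2.1)
      (L ((0 : ℝ), (0 : ℝ), γ * η, Lp vstarp, (0 : V))) 0 := by
    have := hLat.comp_hasDerivAt_of_eq 0 hξ hF0w.symm
    exact this
  -- but F T (F s wminus) = h (t₀ + s)
  have hfun : ∀ s : ℝ, F T (F s wminus) = h (t₀ + s) := by
    intro s
    have h1' : F T (F s wminus) = F s wplus := by
      have e1 : F (T + s) wminus = F T (F s wminus) := by rw [hFgrp]; rfl
      have e2 : F (s + T) wminus = F s (F T wminus) := by rw [hFgrp]; rfl
      rw [← e1, add_comm T s, e2, hFT]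
    have h2' : h (t₀ + s) = F s wplus := by
      rw [hh (t₀ + s), add_comm t₀ s, hFgrp, Function.comp_apply, ← hh t₀, hht₀]
    rw [h1', h2']
  -- derivative of s ↦ (h (t₀ + s)).2.1 at 0 is τ.2.1
  have hshift : HasDerivAt (fun s => h (t₀ + s)) τ 0 := by
    have hg : HasDerivAt (fun s : ℝ => t₀ + s) 1 0 := by
      simpa using (hasDerivAt_id (0 : ℝ)).const_add t₀
    have hτ' : HasDerivAt h τ (t₀ + 0) := by simpa using hτ
    have := HasDerivAt.scomp 0 hτ' hg
    simp only [one_smul] at this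
    exact this
  have hτy : HasDerivAt (fun s => (h (t₀ + s)).2.1) τ.2.1 0 := by
    have π : (ℝ × ℝ × ℝ × EuclideanSpace ℝ (Fin N) × V) →L[ℝ] ℝ :=
      (ContinuousLinearMap.fst ℝ ℝ (ℝ × EuclideanSpace ℝ (Fin N) × V)).comp
        (ContinuousLinearMap.snd ℝ ℝ (ℝ × ℝ × EuclideanSpace ℝ (Fin N) × V))
    exact ((ContinuousLinearMap.fst ℝ ℝ (ℝ × EuclideanSpace ℝ (Fin N) × V)).comp
        (ContinuousLinearMap.snd ℝ ℝ (ℝ × ℝ × EuclideanSpace ℝ (Fin N) × V))).hasFDerivAt.comp_hasDerivAt 0 hshift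
  have hcomp' : HasDerivAt (fun s => (h (t₀ + s)).2.1)
      (L ((0 : ℝ), (0 : ℝ), γ * η, Lp vstarp, (0 : V))) 0 := by
    simpa only [hfun] using hcomp
  have key : L ((0 : ℝ), (0 : ℝ), γ * η, Lp vstarp, (0 : V)) = τ.2.1 :=
    hcomp'.unique hτy
  -- decompose the vector and derive L value = 0
  have hdecomp : ((0 : ℝ), (0 : ℝ), γ * η, Lp vstarp, (0 : V))
      = (γ * η) • (((0 : ℝ), (0 : ℝ), (1 : ℝ), (0 : EuclideanSpace ℝ (Fin N)), (0 : V)) : ℝ × ℝ × ℝ × EuclideanSpace ℝ (Fin N) × V)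
        + ∑ j : Fin N, (Lp vstarp j) •
          (((0 : ℝ), (0 : ℝ), (0 : ℝ), EuclideanSpace.single j (1 : ℝ), (0 : V)) : ℝ × ℝ × ℝ × EuclideanSpace ℝ (Fin N) × V) := by
    have hv : (Lp vstarp : EuclideanSpace ℝ (Fin N))
        = ∑ j : Fin N, (Lp vstarp j) • EuclideanSpace.single j (1 : ℝ) := by
      have := (EuclideanSpace.basisFun (Fin N) ℝ).sum_repr (Lp vstarp)
      simpa [EuclideanSpace.basisFun_apply, EuclideanSpace.basisFun_repr] using this.symm
    refine Prod.ext ?_ (Prod.ext ?_ (Prod.ext ?_ (Prod.ext ?_ ?_))) <;>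
      simp [Prod.fst_sum, Prod.snd_sum] <;> try exact hv
  have : L ((0 : ℝ), (0 : ℝ), γ * η, Lp vstarp, (0 : V)) = 0 := by
    rw [hdecomp, map_add, map_smul, map_sum]
    rw [h1]
    simp only [map_smul, h2]
    simp
  rw [this] at key
  exact htrans key.symm
end

section
/- Let β > 0 and Δ₁, Δ₂ ∈ ℝ with Δ₂ ≠ 0, and set φ = arctan(Δ₁/Δ₂). Let r : ℝ → ℝ be continuous and suppose there exist constants Cr > 0 and ν > 0 such that |r(t)| ≤ Cr·e^{−νt} for all t ≥ 0. Then there exists an integer ℓ₀ > 0 and real numbers T^{(ℓ)} for ℓ ≥ ℓ₀ such that Δ₁ cos(βT^{(ℓ)}) + Δ₂ sin(βT^{(ℓ)}) + r(T^{(ℓ)}) = 0 for every ℓ ≥ ℓ₀, and T^{(ℓ)} − (ℓπ − φ)/β → 0 as ℓ → +∞ (i.e., T^{(ℓ)} = (1/β)(ℓπ − φ) + o(1)). -/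
set_option maxHeartbeats 1000000


open Filter

/-- Persistence, under an exponentially decaying continuous perturbation `r`,
of the sequence of roots of `Δ₁ cos (β t) + Δ₂ sin (β t) = 0`: there are an integer `ℓ₀ > 0`
and reals `T⁽ℓ⁾` for `ℓ ≥ ℓ₀` solving the perturbed equation, with
`T⁽ℓ⁾ = (ℓ π - φ) / β + o(1)` as `ℓ → ∞`. -/
theorem statement7 (β Δ₁ Δ₂ : ℝ) (hβ : 0 < β) (hΔ₂ : Δ₂ ≠ 0)
    (φ : ℝ) (hφ : φ = Real.arctan (Δ₁ / Δ₂))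
    (r : ℝ → ℝ) (hr : Continuous r)
    (Cr ν : ℝ) (hCr : 0 < Cr) (hν : 0 < ν)
    (hdecay : ∀ t : ℝ, 0 ≤ t → |r t| ≤ Cr * Real.exp (-ν * t)) :
    ∃ ℓ₀ : ℕ, 0 < ℓ₀ ∧ ∃ T : ℕ → ℝ,
      (∀ ℓ : ℕ, ℓ₀ ≤ ℓ →
        Δ₁ * Real.cos (β * T ℓ) + Δ₂ * Real.sin (β * T ℓ) + r (T ℓ) = 0) ∧
      Tendsto (fun ℓ : ℕ => T ℓ - ((ℓ : ℝ) * Real.pi - φ) / β) atTop (nhds 0) := by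
  have hπ := Real.pi_pos
  set f : ℝ → ℝ := fun x => Δ₁ * Real.cos (β * x) + Δ₂ * Real.sin (β * x) + r x with hfdef
  have hfc : Continuous f := by fun_prop
  have hcosφ : 0 < Real.cos φ := hφ ▸ Real.cos_arctan_pos _
  set A : ℝ := Δ₂ / Real.cos φ with hAdef
  have hA : A ≠ 0 := div_ne_zero hΔ₂ (ne_of_gt hcosφ)
  have hAbs : 0 < |A| := abs_pos.mpr hA
  have key : ∀ x : ℝ, Δ₁ * Real.cos x + Δ₂ * Real.sin x = A * Real.sin (x + φ) := by
    intro x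
    have htan : Real.tan φ = Δ₁ / Δ₂ := by rw [hφ, Real.tan_arctan]
    have hs : Real.sin φ = (Δ₁ / Δ₂) * Real.cos φ := by
      rw [← htan, Real.tan_eq_sin_div_cos]
      field_simp
    rw [Real.sin_add, hs, hAdef]
    field_simp
    ring
  set t : ℕ → ℝ := fun ℓ => ((ℓ : ℝ) * Real.pi - φ) / β with htdef
  have htβ : ∀ ℓ : ℕ, β * t ℓ = (ℓ : ℝ) * Real.pi - φ := by
    intro ℓ; rw [htdef]; field_simp
  have ht_top : Tendsto t atTop atTop := by
    apply Tendsto.atTop_div_const hβ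
    have h1 : Tendsto (fun ℓ : ℕ => (ℓ : ℝ) * Real.pi) atTop atTop :=
      tendsto_natCast_atTop_atTop.atTop_mul_const hπ
    simpa [sub_eq_add_neg] using tendsto_atTop_add_const_right atTop (-φ) h1
  set δ : ℕ → ℝ := fun ℓ => Real.exp (-ν * t ℓ / 2) with hδdef
  have hδpos : ∀ ℓ, 0 < δ ℓ := fun ℓ => Real.exp_pos _
  have hδ0 : Tendsto δ atTop (nhds 0) := by
    apply Real.tendsto_exp_atBot.comp
    have : Tendsto (fun ℓ : ℕ => t ℓ * (-ν / 2)) atTop atBot :=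
      ht_top.atTop_mul_const_of_neg (by linarith)
    refine this.congr (fun ℓ => by ring)
  -- eventual conditions
  have hev : ∀ᶠ ℓ in atTop, 1 ≤ t ℓ ∧ δ ℓ ≤ 1 ∧ δ ℓ ≤ Real.pi / (2 * β) ∧
      Cr * Real.exp ν * δ ℓ < |A| * (2 / Real.pi * β) := by
    have e1 : ∀ᶠ ℓ in atTop, 1 ≤ t ℓ := ht_top.eventually_ge_atTop 1
    have e2 : ∀ᶠ ℓ in atTop, δ ℓ ≤ 1 := by
      filter_upwards [hδ0.eventually_lt_const (by norm_num : (0:ℝ) < 1)] with ℓ h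
      exact h.le
    have e3 : ∀ᶠ ℓ in atTop, δ ℓ ≤ Real.pi / (2 * β) := by
      filter_upwards [hδ0.eventually_lt_const (by positivity : (0:ℝ) < Real.pi / (2 * β))] with ℓ h
      exact h.le
    have e4 : ∀ᶠ ℓ in atTop, Cr * Real.exp ν * δ ℓ < |A| * (2 / Real.pi * β) := by
      have h0 : Tendsto (fun ℓ => Cr * Real.exp ν * δ ℓ) atTop (nhds 0) := by
        have := hδ0.const_mul (Cr * Real.exp ν)
        rwa [mul_zero] at this
      exact h0.eventually_lt_const (by positivity)
    filter_upwards [e1, e2, e3, e4] with ℓ h1 h2 h3 h4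
    exact ⟨h1, h2, h3, h4⟩
  obtain ⟨N, hN⟩ := eventually_atTop.mp hev
  set ℓ₀ : ℕ := max N 1 with hℓ₀def
  -- the core root-finding lemma
  have root : ∀ ℓ : ℕ, ℓ₀ ≤ ℓ → ∃ x : ℝ, |x - t ℓ| ≤ δ ℓ ∧ f x = 0 := by
    intro ℓ hℓ
    obtain ⟨h1, h2, h3, h4⟩ := hN ℓ (le_trans (le_max_left _ _) hℓ)
    set d : ℝ := δ ℓ with hd
    set τ : ℝ := t ℓ with hτ
    have hdpos : 0 < d := hδpos ℓ
    have ha0 : 0 ≤ τ - d := by linarith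
    have hβd : 0 < β * d := by positivity
    have hβd2 : β * d ≤ Real.pi / 2 := by
      have := mul_le_mul_of_nonneg_left h3 hβ.le
      calc β * d ≤ β * (Real.pi / (2 * β)) := this
        _ = Real.pi / 2 := by field_simp
    have hsin_lb : 2 / Real.pi * (β * d) ≤ Real.sin (β * d) :=
      Real.mul_le_sin hβd.le hβd2
    have hsinpos : 0 < Real.sin (β * d) := lt_of_lt_of_le (by positivity) hsin_lb
    -- key inequality
    have hd2 : d * d = Real.exp (-ν * τ) := by
      rw [hd, hδdef, ← Real.exp_add]; ring_nf; rfl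
    have hkey : Cr * Real.exp (-ν * (τ - d)) < |A| * Real.sin (β * d) := by
      have hexp : Real.exp (-ν * (τ - d)) = Real.exp (ν * d) * Real.exp (-ν * τ) := by
        rw [← Real.exp_add]; ring_nf
      have hexpd : Real.exp (ν * d) ≤ Real.exp ν := by
        apply Real.exp_le_exp.mpr
        nlinarith
      calc Cr * Real.exp (-ν * (τ - d))
          = Cr * Real.exp (ν * d) * (d * d) := by rw [hexp, hd2]; ring
        _ ≤ Cr * Real.exp ν * (d * d) := by gcongr
        _ = (Cr * Real.exp ν * d) * d := by ring
        _ < (|A| * (2 / Real.pi * β)) * d := by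
            exact mul_lt_mul_of_pos_right h4 hdpos
        _ = |A| * (2 / Real.pi * (β * d)) := by ring
        _ ≤ |A| * Real.sin (β * d) := by
            exact mul_le_mul_of_nonneg_left hsin_lb hAbs.le
    set a : ℝ := τ - d with haa
    set b : ℝ := τ + d with hbb
    have hab : a ≤ b := by simp [haa, hbb]; linarith
    set s : ℝ := A * ((-1 : ℝ) ^ ℓ) * Real.sin (β * d) with hs
    have hcosℓ : Real.cos ((ℓ : ℝ) * Real.pi) = (-1 : ℝ) ^ ℓ := by
      simpa using Real.cos_nat_mul_pi_sub 0 ℓ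
    have hfb : f b = s + r b := by
      have hbβ : β * b + φ = (ℓ : ℝ) * Real.pi + β * d := by
        rw [hbb]; rw [mul_add, htβ]; ring
      have : Real.sin (β * b + φ) = (-1 : ℝ) ^ ℓ * Real.sin (β * d) := by
        rw [hbβ, Real.sin_add, Real.sin_nat_mul_pi, hcosℓ]; ring
      rw [hfdef]; simp only []
      rw [key (β * b), this, hs]; ring
    have hfa : f a = -s + r a := by
      have haβ : β * a + φ = (ℓ : ℝ) * Real.pi - β * d := by
        rw [haa]; rw [mul_sub, htβ]; ring
      have : Real.sin (β * a + φ) = -((-1 : ℝ) ^ ℓ * Real.sin (β * d)) := by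
        rw [haβ, Real.sin_nat_mul_pi_sub]
      rw [hfdef]; simp only []
      rw [key (β * a), this, hs]; ring
    have habs_s : |s| = |A| * Real.sin (β * d) := by
      rw [hs, abs_mul, abs_mul, abs_pow, abs_neg, abs_one, one_pow, mul_one,
        abs_of_pos hsinpos]
    have hra : |r a| ≤ Cr * Real.exp (-ν * a) := hdecay a ha0
    have hrb : |r b| ≤ Cr * Real.exp (-ν * a) := by
      refine le_trans (hdecay b (by linarith)) ?_
      have : Real.exp (-ν * b) ≤ Real.exp (-ν * a) := by
        apply Real.exp_le_exp.mpr; nlinarith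
      nlinarith
    have hras : |r a| < |s| := by rw [habs_s]; exact lt_of_le_of_lt hra hkey
    have hrbs : |r b| < |s| := by rw [habs_s]; exact lt_of_le_of_lt hrb hkey
    have hs0 : s ≠ 0 := by
      intro h; rw [h, abs_zero] at hras; exact absurd hras (abs_nonneg (r a)).not_gt
    have main : ∃ x ∈ Set.Icc a b, f x = 0 := by
      rcases hs0.lt_or_gt with hneg | hpos
      · -- s < 0 : f b ≤ 0 ≤ f a
        have hfb0 : f b ≤ 0 := by
          rw [hfb]
          have := abs_le.mp hrbs.le
          rw [abs_of_neg hneg] at this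
          linarith [this.2]
        have hfa0 : 0 ≤ f a := by
          rw [hfa]
          have := abs_le.mp hras.le
          rw [abs_of_neg hneg] at this
          linarith [this.1]
        have := intermediate_value_Icc' hab hfc.continuousOn
          (Set.mem_Icc.mpr ⟨hfb0, hfa0⟩)
        obtain ⟨x, hx, hfx⟩ := this
        exact ⟨x, hx, hfx⟩
      · -- 0 < s : f a ≤ 0 ≤ f b
        have hfa0 : f a ≤ 0 := by
          rw [hfa]
          have := abs_le.mp hras.le
          rw [abs_of_pos hpos] at this
          linarith [this.2]
        have hfb0 : 0 ≤ f b := by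
          rw [hfb]
          have := abs_le.mp hrbs.le
          rw [abs_of_pos hpos] at this
          linarith [this.1]
        have := intermediate_value_Icc hab hfc.continuousOn
          (Set.mem_Icc.mpr ⟨hfa0, hfb0⟩)
        obtain ⟨x, hx, hfx⟩ := this
        exact ⟨x, hx, hfx⟩
    obtain ⟨x, hx, hfx⟩ := main
    refine ⟨x, ?_, hfx⟩
    rw [abs_le]
    obtain ⟨hx1, hx2⟩ := Set.mem_Icc.mp hx
    have hx1' : τ - d ≤ x := hx1
    have hx2' : x ≤ τ + d := hx2
    exact ⟨by linarith, by linarith⟩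
  -- build T
  have H : ∀ ℓ : ℕ, ∃ x : ℝ, ℓ₀ ≤ ℓ → (|x - t ℓ| ≤ δ ℓ ∧ f x = 0) := by
    intro ℓ
    by_cases h : ℓ₀ ≤ ℓ
    · obtain ⟨x, hx⟩ := root ℓ h
      exact ⟨x, fun _ => hx⟩
    · exact ⟨0, fun hc => absurd hc h⟩
  choose T hT using H
  refine ⟨ℓ₀, lt_of_lt_of_le one_pos (le_max_right _ _), T, ?_, ?_⟩
  · intro ℓ hℓ
    exact (hT ℓ hℓ).2
  · apply squeeze_zero_norm' _ hδ0
    filter_upwards [eventually_ge_atTop ℓ₀] with ℓ hℓ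
    simpa [Real.norm_eq_abs] using (hT ℓ hℓ).1
end
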